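/- Conditional on the event that F*_S(x,y) is defined for all x,y ∈ S, the partial function F*_S : S × S → S is distributed as a uniformly random two-place function on S, when F* is a uniformly random three-place function on [m] and S ⊆ [m] is any fixed i-element subset. -/
import Mathlib

open Finset

namespace CondUnif

variable {m : ℕ}

def FirstHit (S : Finset (Fin m)) (f : Fin m → Fin m) (s : Fin m) : Prop :=
  ∃ z, f z ∈ S ∧ (∀ w, w < z → f w ∉ S) ∧ f z = s

lemma exists_firstHit {S : Finset (Fin m)} {f : Fin m → Fin m}
    (h : ∃ z, f z ∈ S) : ∃ s ∈ S, FirstHit S f s := by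
  classical
  obtain ⟨z0, hz0⟩ := h
  set T : Finset (Fin m) := univ.filter (fun z => f z ∈ S) with hT
  have hne : T.Nonempty := ⟨z0, by simp [hT, hz0]⟩
  have hmem := T.min'_mem hne
  simp only [hT, mem_filter] at hmem
  refine ⟨f (T.min' hne), hmem.2, T.min' hne, hmem.2, ?_, rfl⟩
  intro w hw hws
  have hwT : w ∈ T := by simp [hT, hws]
  exact absurd (T.min'_le w hwT) (not_le.mpr hw)

lemma firstHit_unique {S : Finset (Fin m)} {f : Fin m → Fin m} {s t : Fin m}
    (hs : FirstHit S f s) (ht : FirstHit S f t) : s = t := by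
  obtain ⟨z, hz, hzmin, rfl⟩ := hs
  obtain ⟨w, hw, hwmin, rfl⟩ := ht
  rcases lt_trichotomy z w with h | h | h
  · exact absurd hz (hwmin z h)
  · rw [h]
  · exact absurd hw (hzmin w h)

lemma swap_mem_iff {S : Finset (Fin m)} {s t : Fin m} (hs : s ∈ S) (ht : t ∈ S)
    (a : Fin m) : Equiv.swap s t a ∈ S ↔ a ∈ S := by
  rcases eq_or_ne a s with rfl | has
  · simp [Equiv.swap_apply_left, hs, ht]
  rcases eq_or_ne a t with rfl | hat
  · simp [Equiv.swap_apply_right, hs, ht]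
  · rw [Equiv.swap_apply_of_ne_of_ne has hat]

lemma firstHit_swap {S : Finset (Fin m)} {s t : Fin m} (hs : s ∈ S) (ht : t ∈ S)
    {f : Fin m → Fin m} (h : FirstHit S f s) :
    FirstHit S (fun z => Equiv.swap s t (f z)) t := by
  obtain ⟨z, hz, hmin, hval⟩ := h
  refine ⟨z, ?_, ?_, ?_⟩
  · rw [swap_mem_iff hs ht]; exact hz
  · intro w hw
    rw [swap_mem_iff hs ht]; exact hmin w hw
  · show Equiv.swap s t (f z) = t
    rw [hval, Equiv.swap_apply_left]

lemma card_firstHit_eq {S : Finset (Fin m)} {s t : Fin m} (hs : s ∈ S) (ht : t ∈ S) :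
    Nat.card {f : Fin m → Fin m // FirstHit S f s} =
    Nat.card {f : Fin m → Fin m // FirstHit S f t} := by
  apply Nat.card_congr
  refine ⟨fun f => ⟨fun z => Equiv.swap s t (f.1 z), firstHit_swap hs ht f.2⟩,
          fun f => ⟨fun z => Equiv.swap s t (f.1 z), ?_⟩, ?_, ?_⟩
  · have := firstHit_swap ht hs f.2
    rwa [Equiv.swap_comm t s] at this
  · intro f; ext z; simp [Equiv.swap_apply_self]
  · intro f; ext z; simp [Equiv.swap_apply_self]

lemma card_hits (S : Finset (Fin m)) :
    Nat.card {f : Fin m → Fin m // ∃ z, f z ∈ S} =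
    ∑ s ∈ S, Nat.card {f : Fin m → Fin m // FirstHit S f s} := by
  classical
  simp_rw [Nat.card_eq_fintype_card, Fintype.card_subtype]
  rw [← Finset.card_biUnion]
  · congr 1
    ext f
    simp only [mem_biUnion, mem_filter, mem_univ, true_and]
    constructor
    · intro h
      obtain ⟨s, hsS, hfs⟩ := exists_firstHit h
      exact ⟨s, hsS, hfs⟩
    · rintro ⟨s, -, z, hz, -, -⟩
      exact ⟨z, hz⟩
  · intro s hs t ht hst
    simp only [disjoint_left, mem_filter, mem_univ, true_and]
    rintro f hfs hft
    exact hst (firstHit_unique hfs hft)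

lemma firstHit_const {S : Finset (Fin m)} {s : Fin m} (hs : s ∈ S) :
    FirstHit S (fun _ => s) s :=
  ⟨⟨0, s.pos⟩, hs, fun w hw => absurd hw (by simp [Fin.lt_def]), rfl⟩

lemma card_pi_subtype (Q : Fin m × Fin m → (Fin m → Fin m) → Prop) :
    Nat.card {F : Fin m → Fin m → Fin m → Fin m // ∀ x y, Q (x, y) (F x y)} =
    ∏ p : Fin m × Fin m, Nat.card {f : Fin m → Fin m // Q p f} := by
  rw [← Nat.card_pi]
  apply Nat.card_congr
  refine (Equiv.subtypeEquiv (Equiv.curry (Fin m) (Fin m) (Fin m → Fin m)).symm ?_).trans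
    Equiv.subtypePiEquivPi
  intro F
  constructor
  · intro h p; exact h p.1 p.2
  · intro h x y; exact h (x, y)

end CondUnif

open CondUnif Finset in
/-- Conditional on `F*_S` being everywhere defined on `S × S`, the induced two-place
function `F*_S` is uniformly distributed among all two-place functions on `S`:
for every fixed `g : S → S → S`, the conditional probability that `F*_S = g` equals
`1 / i^(i·i)` (with `|S| = i`), where `F*_S(x,y) = F*(x,y,z)` for the least `z`
with `F*(x,y,z) ∈ S`. -/
theorem conditional_uniformity_of_induced_function (m i : ℕ) (hi : 0 < i)
    (S : Finset (Fin m)) (hS : S.card = i)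
    (g : {x // x ∈ S} → {x // x ∈ S} → {x // x ∈ S}) :
    (Nat.card {F : Fin m → Fin m → Fin m → Fin m //
          (∀ x ∈ S, ∀ y ∈ S, ∃ z, F x y z ∈ S) ∧
          ∀ x : {x // x ∈ S}, ∀ y : {x // x ∈ S},
            ∃ z, F x.1 y.1 z ∈ S ∧ (∀ w, w < z → F x.1 y.1 w ∉ S) ∧
              F x.1 y.1 z = (g x y : Fin m)} : ℝ) /
      (Nat.card {F : Fin m → Fin m → Fin m → Fin m //
          ∀ x ∈ S, ∀ y ∈ S, ∃ z, F x y z ∈ S} : ℝ) =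
    1 / (i : ℝ) ^ (i * i) := by
  classical
  have hSne : S.Nonempty := by
    rw [← card_pos, hS]; exact hi
  obtain ⟨s0, hs0⟩ := hSne
  have hm : 0 < m := s0.pos
  set N1 : ℕ := Nat.card {f : Fin m → Fin m // FirstHit S f s0} with hN1def
  set c : ℕ := Nat.card (Fin m → Fin m) with hcdef
  have hN1pos : 0 < N1 := by
    rw [hN1def]
    exact Nat.card_pos_iff.mpr ⟨⟨⟨fun _ => s0, firstHit_const hs0⟩⟩, inferInstance⟩
  have hcpos : 0 < c := by
    rw [hcdef]
    exact Nat.card_pos_iff.mpr ⟨⟨fun _ => s0⟩, inferInstance⟩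
  -- N = i * N1
  have hN : Nat.card {f : Fin m → Fin m // ∃ z, f z ∈ S} = i * N1 := by
    rw [card_hits S]
    rw [Finset.sum_congr rfl (fun s hs => card_firstHit_eq hs hs0), Finset.sum_const, hS,
      smul_eq_mul]
  -- predicates
  set Qa : Fin m × Fin m → (Fin m → Fin m) → Prop :=
    fun p f => p.1 ∈ S → p.2 ∈ S → ∃ z, f z ∈ S with hQa
  set Qg : Fin m × Fin m → (Fin m → Fin m) → Prop :=
    fun p f => ∀ (hx : p.1 ∈ S) (hy : p.2 ∈ S), FirstHit S f (g ⟨p.1, hx⟩ ⟨p.2, hy⟩) with hQg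
  set k : ℕ := (univ.filter (fun p : Fin m × Fin m => ¬(p.1 ∈ S ∧ p.2 ∈ S))).card with hk
  -- denominator count
  have hA : Nat.card {F : Fin m → Fin m → Fin m → Fin m //
      ∀ x ∈ S, ∀ y ∈ S, ∃ z, F x y z ∈ S} = (i * N1) ^ (i * i) * c ^ k := by
    have e1 : Nat.card {F : Fin m → Fin m → Fin m → Fin m //
        ∀ x ∈ S, ∀ y ∈ S, ∃ z, F x y z ∈ S} =
        Nat.card {F : Fin m → Fin m → Fin m → Fin m // ∀ x y, Qa (x, y) (F x y)} := by
      apply Nat.card_congr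
      apply Equiv.subtypeEquivRight
      intro F
      constructor
      · intro h x y hx hy; exact h x hx y hy
      · intro h x hx y hy; exact h x y hx hy
    rw [e1, card_pi_subtype]
    have hval : ∀ p : Fin m × Fin m, Nat.card {f : Fin m → Fin m // Qa p f} =
        if p.1 ∈ S ∧ p.2 ∈ S then i * N1 else c := by
      intro p
      by_cases hp : p.1 ∈ S ∧ p.2 ∈ S
      · rw [if_pos hp, ← hN]
        apply Nat.card_congr
        apply Equiv.subtypeEquivRight
        intro f
        simp [hQa, hp.1, hp.2]
      · rw [if_neg hp]
        apply Nat.card_congr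
        apply Equiv.subtypeUnivEquiv
        intro f hx hy
        exact absurd ⟨hx, hy⟩ hp
    rw [Finset.prod_congr rfl (fun p _ => hval p), Finset.prod_ite, Finset.prod_const,
      Finset.prod_const, hk]
    congr 2
    rw [← hS, ← Finset.card_product]
    congr 1
    ext p
    simp [Finset.mem_product]
  -- numerator count
  have hAg : Nat.card {F : Fin m → Fin m → Fin m → Fin m //
      (∀ x ∈ S, ∀ y ∈ S, ∃ z, F x y z ∈ S) ∧
      ∀ x : {x // x ∈ S}, ∀ y : {x // x ∈ S},
        ∃ z, F x.1 y.1 z ∈ S ∧ (∀ w, w < z → F x.1 y.1 w ∉ S) ∧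
          F x.1 y.1 z = (g x y : Fin m)} = N1 ^ (i * i) * c ^ k := by
    have e1 : Nat.card {F : Fin m → Fin m → Fin m → Fin m //
        (∀ x ∈ S, ∀ y ∈ S, ∃ z, F x y z ∈ S) ∧
        ∀ x : {x // x ∈ S}, ∀ y : {x // x ∈ S},
          ∃ z, F x.1 y.1 z ∈ S ∧ (∀ w, w < z → F x.1 y.1 w ∉ S) ∧
            F x.1 y.1 z = (g x y : Fin m)} =
        Nat.card {F : Fin m → Fin m → Fin m → Fin m // ∀ x y, Qg (x, y) (F x y)} := by
      apply Nat.card_congr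
      apply Equiv.subtypeEquivRight
      intro F
      constructor
      · rintro ⟨-, h2⟩ x y hx hy
        exact h2 ⟨x, hx⟩ ⟨y, hy⟩
      · intro h
        constructor
        · intro x hx y hy
          obtain ⟨z, hz, -, -⟩ := h x y hx hy
          exact ⟨z, hz⟩
        · intro x y
          exact h x.1 y.1 x.2 y.2
    rw [e1, card_pi_subtype]
    have hval : ∀ p : Fin m × Fin m, Nat.card {f : Fin m → Fin m // Qg p f} =
        if p.1 ∈ S ∧ p.2 ∈ S then N1 else c := by
      intro p
      by_cases hp : p.1 ∈ S ∧ p.2 ∈ S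
      · rw [if_pos hp, hN1def]
        rw [← card_firstHit_eq (g ⟨p.1, hp.1⟩ ⟨p.2, hp.2⟩).2 hs0]
        apply Nat.card_congr
        apply Equiv.subtypeEquivRight
        intro f
        constructor
        · intro h; exact h hp.1 hp.2
        · intro h hx hy; exact h
      · rw [if_neg hp]
        apply Nat.card_congr
        apply Equiv.subtypeUnivEquiv
        intro f hx hy
        exact absurd ⟨hx, hy⟩ hp
    rw [Finset.prod_congr rfl (fun p _ => hval p), Finset.prod_ite, Finset.prod_const,
      Finset.prod_const, hk]
    congr 2
    rw [← hS, ← Finset.card_product]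
    congr 1
    ext p
    simp [Finset.mem_product]
  rw [hA, hAg]
  have h1 : (0:ℝ) < (N1 : ℝ) := by exact_mod_cast hN1pos
  have h2 : (0:ℝ) < (c : ℝ) := by exact_mod_cast hcpos
  have h3 : (0:ℝ) < (i : ℝ) := by exact_mod_cast hi
  push_cast
  rw [div_eq_div_iff (by positivity) (by positivity)]
  ring
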